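/- arXiv:1603.01200 — 7 statements merged into one kernel-verified Lean document; each statement's English description precedes it below -/
import Mathlib

section
/- For every real α ∈ (1,2], the α-offspring distribution is a probability distribution with mean α/(α−1): one has ∑_{k=2}^∞ θ_α(k) = 1 and ∑_{k=2}^∞ k·θ_α(k) = α/(α−1). -/
/-!
Writing `P n = ∏_{j<n} (1 - (α-1)/(j+1))`, one has
`θ_α(n+2) = α P n / ((n+1)(n+2))`. This makes both series telescope:
`θ_α(n+2) = P n/(n+1) - P (n+1)/(n+2)` and `(n+2) θ_α(n+2) = α/(α-1) (P n - P (n+1))`,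
with nonnegative terms since `α ≤ 2`. As `P 0 = 1`, the sums are `1` and `α/(α-1)` once
`P n → 0`, which holds because `P n ≤ exp (-(α-1) Hₙ)` and the harmonic numbers `Hₙ` diverge.
-/

open scoped BigOperators

/-- The `α`-offspring distribution: `θ_α(0) = θ_α(1) = 0` and
`θ_α(k) = α (2−α)(3−α)⋯(k−1−α) / k!` for `k ≥ 2`. -/
noncomputable def theta (α : ℝ) (k : ℕ) : ℝ :=
  if k < 2 then 0 else α * (∏ j ∈ Finset.Ico 2 k, ((j : ℝ) - α)) / (Nat.factorial k)

open Finset Filter Topology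

theorem hasSum_sub_succ_of_tendsto {f : ℕ → ℝ} {l : ℝ} (hf : ∀ n, f (n + 1) ≤ f n)
    (h : Tendsto f atTop (𝓝 l)) : HasSum (fun n ↦ f n - f (n + 1)) (f 0 - l) := by
  refine (hasSum_iff_tendsto_nat_of_nonneg (fun n ↦ sub_nonneg.2 (hf n)) _).2 ?_
  simpa only [sum_range_sub'] using h.const_sub (f 0)

theorem hasSum_of_hasSum_nat_add {G : Type*} [AddCommGroup G] [TopologicalSpace G]
    [IsTopologicalAddGroup G] {f : ℕ → G} {g : G} {k : ℕ} (hf : ∀ i < k, f i = 0)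
    (h : HasSum (fun n ↦ f (n + k)) g) : HasSum f g := by
  rwa [← hasSum_nat_add_iff' k, sum_eq_zero fun i hi ↦ hf i (mem_range.1 hi), sub_zero]

noncomputable def prodOneSubDivSucc (c : ℝ) (n : ℕ) : ℝ :=
  ∏ j ∈ range n, (1 - c / (j + 1))

section prodOneSubDivSucc

variable {c : ℝ}

theorem prodOneSubDivSucc_zero (c : ℝ) : prodOneSubDivSucc c 0 = 1 := prod_range_zero _

theorem prodOneSubDivSucc_succ (c : ℝ) (n : ℕ) :
    prodOneSubDivSucc c (n + 1) = prodOneSubDivSucc c n * (1 - c / (n + 1)) :=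
  prod_range_succ _ _

theorem one_sub_div_succ_nonneg (hc : c ≤ 1) (n : ℕ) : 0 ≤ 1 - c / ((n : ℝ) + 1) := by
  rw [sub_nonneg, div_le_one (by positivity)]
  linarith [(n.cast_nonneg : (0 : ℝ) ≤ n)]

theorem prodOneSubDivSucc_nonneg (hc : c ≤ 1) (n : ℕ) : 0 ≤ prodOneSubDivSucc c n :=
  prod_nonneg fun j _ ↦ one_sub_div_succ_nonneg hc j

theorem prodOneSubDivSucc_succ_le (hc0 : 0 ≤ c) (hc1 : c ≤ 1) (n : ℕ) :
    prodOneSubDivSucc c (n + 1) ≤ prodOneSubDivSucc c n := by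
  rw [prodOneSubDivSucc_succ]
  refine mul_le_of_le_one_right (prodOneSubDivSucc_nonneg hc1 n) ?_
  have : 0 ≤ c / ((n : ℝ) + 1) := by positivity
  linarith

theorem prodOneSubDivSucc_le_exp (hc : c ≤ 1) (n : ℕ) :
    prodOneSubDivSucc c n ≤ Real.exp (-c * ∑ j ∈ range n, 1 / ((j : ℝ) + 1)) := by
  rw [mul_sum, Real.exp_sum]
  refine prod_le_prod (fun j _ ↦ one_sub_div_succ_nonneg hc j) fun j _ ↦ ?_
  rw [mul_one_div, neg_div]
  linarith [Real.add_one_le_exp (-(c / ((j : ℝ) + 1)))]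

theorem tendsto_prodOneSubDivSucc (hc0 : 0 < c) (hc1 : c ≤ 1) :
    Tendsto (prodOneSubDivSucc c) atTop (𝓝 0) := by
  refine squeeze_zero (prodOneSubDivSucc_nonneg hc1) (prodOneSubDivSucc_le_exp hc1) ?_
  refine Real.tendsto_exp_atBot.comp ?_
  simpa only [neg_mul, Function.comp_def] using tendsto_neg_atTop_atBot.comp
    (Real.tendsto_sum_range_one_div_nat_succ_atTop.const_mul_atTop hc0)

end prodOneSubDivSucc

theorem theta_of_lt_two (α : ℝ) {k : ℕ} (hk : k < 2) : theta α k = 0 := if_pos hk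

theorem theta_succ {α : ℝ} {k : ℕ} (hk : 2 ≤ k) :
    theta α (k + 1) = theta α k * (k - α) / (k + 1) := by
  simp only [theta, show ¬k + 1 < 2 by omega, show ¬k < 2 by omega, if_false,
    prod_Ico_succ_top hk, Nat.factorial_succ k]
  push_cast
  field_simp

theorem theta_add_two (α : ℝ) (n : ℕ) :
    theta α (n + 2) = α * prodOneSubDivSucc (α - 1) n / ((n + 1) * (n + 2)) := by
  induction n with
  | zero => norm_num [theta, prodOneSubDivSucc_zero]
  | succ n ih =>
    rw [theta_succ (by omega), ih, prodOneSubDivSucc_succ]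
    push_cast
    field_simp
    ring

theorem theta_add_two_eq_sub (α : ℝ) (n : ℕ) :
    theta α (n + 2) = prodOneSubDivSucc (α - 1) n / (n + 1)
      - prodOneSubDivSucc (α - 1) (n + 1) / ((n + 1 : ℕ) + 1) := by
  rw [theta_add_two, prodOneSubDivSucc_succ]
  push_cast
  field_simp
  ring

theorem add_two_mul_theta_add_two {α : ℝ} (hα : α ≠ 1) (n : ℕ) :
    ((n : ℝ) + 2) * theta α (n + 2) =
      α / (α - 1) * (prodOneSubDivSucc (α - 1) n - prodOneSubDivSucc (α - 1) (n + 1)) := by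
  have : α - 1 ≠ 0 := sub_ne_zero.2 hα
  rw [theta_add_two, prodOneSubDivSucc_succ]
  field_simp
  ring

/-- For `α ∈ (1,2]`, `θ_α` is a probability distribution with mean `α/(α−1)`. -/
theorem stmt_1 (α : ℝ) (hα1 : 1 < α) (hα2 : α ≤ 2) :
    (∑' k : ℕ, theta α k = 1) ∧ (∑' k : ℕ, (k : ℝ) * theta α k = α / (α - 1)) := by
  have hc0 : 0 < α - 1 := by linarith
  have hc1 : α - 1 ≤ 1 := by linarith
  have hP := tendsto_prodOneSubDivSucc hc0 hc1
  have hP_nonneg := prodOneSubDivSucc_nonneg hc1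
  have h_mass : HasSum (fun n ↦ theta α (n + 2)) 1 := by
    have hf : Tendsto (fun n : ℕ ↦ prodOneSubDivSucc (α - 1) n / (n + 1)) atTop (𝓝 0) :=
      squeeze_zero (fun n ↦ div_nonneg (hP_nonneg n) (by positivity))
        (fun n ↦ div_le_self (hP_nonneg n) (by simp)) hP
    have := hasSum_sub_succ_of_tendsto (fun n ↦ div_le_div₀ (hP_nonneg n)
      (prodOneSubDivSucc_succ_le hc0.le hc1 n) (by positivity) (by push_cast; linarith)) hf
    simpa only [← theta_add_two_eq_sub, prodOneSubDivSucc_zero, CharP.cast_eq_zero, zero_add,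
      div_one, sub_zero] using this
  have h_mean : HasSum (fun n : ℕ ↦ ((n : ℝ) + 2) * theta α (n + 2)) (α / (α - 1)) := by
    have := (hasSum_sub_succ_of_tendsto (prodOneSubDivSucc_succ_le hc0.le hc1) hP).mul_left
      (α / (α - 1))
    simpa only [← add_two_mul_theta_add_two hα1.ne', prodOneSubDivSucc_zero, sub_zero, mul_one]
      using this
  refine ⟨(hasSum_of_hasSum_nat_add (k := 2) (fun _ hk ↦ theta_of_lt_two α hk) h_mass).tsum_eq,
    (hasSum_of_hasSum_nat_add (k := 2) (fun _ hk ↦ ?_) ?_).tsum_eq⟩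
  · rw [theta_of_lt_two α hk, mul_zero]
  · simpa only [Nat.cast_add, Nat.cast_ofNat] using h_mean
end

section
/- For every real α ∈ (1,2] and every r ∈ (0,1], the generating function of the size-biased α-offspring distribution satisfies ((α−1)/α)·∑_{k=2}^∞ k·θ_α(k)·r^k = r − r·(1−r)^{α−1}. -/
open scoped BigOperators

/-!
The coefficient `((α-1)/α)·k·θ_α(k)` of `r^k` equals `(-1)^k·binom(α-1, k-1)` for `k ≥ 2`, so for
`|r| < 1` Newton's binomial series of `(1-r)^(α-1)` sums the series to `r - r(1-r)^(α-1)`.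
At `r = 1` the coefficients are nonnegative: their partial sums are bounded by the limit `1` of
the right-hand side as `r → 1⁻`, so the series converges, and Abel's theorem identifies its sum.
-/

open Finset Filter Topology Nat

lemma Ring.choose_eq_prod_range_div {K : Type*} [Field K] [CharZero K] (a : K) (n : ℕ) :
    Ring.choose a n = (∏ j ∈ range n, (a - j)) / n ! := by
  rw [Ring.choose_eq_smul, ← descPochhammer_eval_eq_prod_range, smul_eq_mul, inv_mul_eq_div,
    ← descPochhammer_map (algebraMap ℤ K), Polynomial.eval_map_algebraMap,
    Polynomial.aeval_eq_smeval]

lemma Real.hasSum_choose_mul_pow (a : ℝ) {x : ℝ} (hx : |x| < 1) :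
    HasSum (fun n => Ring.choose a n * x ^ n) ((1 + x) ^ a) := by
  have h := (Real.one_add_rpow_hasFPowerSeriesOnBall_zero (a := a)).hasSum (y := x)
    (by simpa [edist_dist, Real.dist_eq] using hx)
  simpa [binomialSeries, mul_comm] using h

lemma hasSum_of_nonneg_of_tendsto_powerSeries {b : ℕ → ℝ} (hb : ∀ n, 0 ≤ b n) {f : ℝ → ℝ}
    {l : ℝ} (hf : ∀ x ∈ Set.Ioo 0 1, HasSum (fun n => b n * x ^ n) (f x))
    (hl : Tendsto f (𝓝[<] 1) (𝓝 l)) : HasSum b l := by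
  have hIoo : Set.Ioo (0 : ℝ) 1 ∈ 𝓝[<] 1 := Ioo_mem_nhdsLT one_pos
  have hpartial (N : ℕ) : ∑ n ∈ range N, b n ≤ l := by
    have hpoly : Tendsto (fun x : ℝ => ∑ n ∈ range N, b n * x ^ n) (𝓝[<] 1)
        (𝓝 (∑ n ∈ range N, b n)) := by
      have hcont : Continuous fun x : ℝ => ∑ n ∈ range N, b n * x ^ n := by fun_prop
      simpa using (hcont.tendsto 1).mono_left nhdsWithin_le_nhds
    refine le_of_tendsto_of_tendsto hpoly hl (eventually_of_mem hIoo fun x hx => ?_)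
    exact sum_le_hasSum _ (fun n _ => mul_nonneg (hb n) (pow_nonneg hx.1.le n)) (hf x hx)
  have hb_summable : Summable b := summable_of_sum_range_le hb hpartial
  have habel := Real.tendsto_tsum_powerSeries_nhdsWithin_lt hb_summable.hasSum.tendsto_sum_nat
  have hf_eq : (fun x => ∑' n, b n * x ^ n) =ᶠ[𝓝[<] 1] f :=
    eventually_of_mem hIoo fun x hx => (hf x hx).tsum_eq
  rw [← tendsto_nhds_unique (habel.congr' hf_eq) hl]
  exact hb_summable.hasSum

lemma theta_nonneg {α : ℝ} (h0 : 0 ≤ α) (h2 : α ≤ 2) (k : ℕ) : 0 ≤ theta α k := by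
  unfold theta
  split_ifs
  · exact le_rfl
  · have : 0 ≤ ∏ j ∈ Ico 2 k, ((j : ℝ) - α) := prod_nonneg fun j hj => by
      have : (2 : ℝ) ≤ j := by exact_mod_cast (mem_Ico.mp hj).1
      linarith
    positivity

noncomputable def sizeBiasedTheta (α : ℝ) (k : ℕ) : ℝ :=
  (α - 1) / α * k * theta α k

lemma sizeBiasedTheta_nonneg {α : ℝ} (h1 : 1 ≤ α) (h2 : α ≤ 2) (k : ℕ) :
    0 ≤ sizeBiasedTheta α k := by
  have := theta_nonneg (by linarith) h2 k
  have : 0 ≤ α - 1 := by linarith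
  unfold sizeBiasedTheta
  positivity

lemma sizeBiasedTheta_add_two {α : ℝ} (hα : α ≠ 0) (n : ℕ) :
    sizeBiasedTheta α (n + 2) = (-1) ^ n * Ring.choose (α - 1) (n + 1) := by
  have hprod : (-1) ^ n * ∏ j ∈ range n, (α - 1 - ((j + 1 : ℕ) : ℝ))
      = ∏ j ∈ Ico 2 (n + 2), ((j : ℝ) - α) := by
    rw [prod_Ico_eq_prod_range, Nat.add_sub_cancel]
    nth_rw 1 [← card_range n]
    rw [← prod_neg]
    exact prod_congr rfl fun j _ => by push_cast; ring
  rw [sizeBiasedTheta, theta, if_neg (by omega), ← hprod, Ring.choose_eq_prod_range_div,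
    prod_range_succ', factorial_succ (n + 1)]
  push_cast
  field_simp
  ring

lemma hasSum_sizeBiasedTheta_mul_pow_of_abs_lt {α r : ℝ} (hα : α ≠ 0) (hr : |r| < 1) :
    HasSum (fun k => sizeBiasedTheta α k * r ^ k) (r - r * (1 - r) ^ (α - 1)) := by
  have hbinom := Real.hasSum_choose_mul_pow (α - 1) (x := -r) (by rwa [abs_neg])
  rw [← hasSum_nat_add_iff' 1] at hbinom
  have hterms : (fun n => sizeBiasedTheta α (n + 2) * r ^ (n + 2))
      = fun n => -r * (Ring.choose (α - 1) (n + 1) * (-r) ^ (n + 1)) := by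
    ext n
    rw [sizeBiasedTheta_add_two hα]
    ring
  have hinit : ∑ k ∈ range 2, sizeBiasedTheta α k * r ^ k = 0 := by
    simp [sum_range_succ, sizeBiasedTheta, theta]
  rw [← hasSum_nat_add_iff' 2, hinit, sub_zero, hterms,
    show r - r * (1 - r) ^ (α - 1) = -r * ((1 - r) ^ (α - 1) - 1) by ring]
  simpa [← sub_eq_add_neg] using hbinom.mul_left (-r)

lemma hasSum_sizeBiasedTheta_mul_pow {α r : ℝ} (hα1 : 1 < α) (hα2 : α ≤ 2) (hr0 : -1 < r)
    (hr1 : r ≤ 1) :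
    HasSum (fun k => sizeBiasedTheta α k * r ^ k) (r - r * (1 - r) ^ (α - 1)) := by
  have hα0 : α ≠ 0 := by positivity
  rcases hr1.lt_or_eq with hr1 | rfl
  · exact hasSum_sizeBiasedTheta_mul_pow_of_abs_lt hα0 (abs_lt.mpr ⟨hr0, hr1⟩)
  · have hcont : Continuous fun x : ℝ => x - x * (1 - x) ^ (α - 1) := by
      fun_prop (disch := linarith)
    simp only [one_pow, mul_one]
    exact hasSum_of_nonneg_of_tendsto_powerSeries (sizeBiasedTheta_nonneg hα1.le hα2)
      (fun x hx => hasSum_sizeBiasedTheta_mul_pow_of_abs_lt hα0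
        (abs_lt.mpr ⟨by linarith [hx.1], hx.2⟩))
      ((hcont.tendsto 1).mono_left nhdsWithin_le_nhds)

/-- For `α ∈ (1,2]` and `r ∈ (0,1]`, the generating function of the size-biased
`α`-offspring distribution satisfies
`((α−1)/α) ∑_{k≥2} k θ_α(k) r^k = r − r (1−r)^{α−1}`. -/
theorem stmt_2 (α r : ℝ) (hα1 : 1 < α) (hα2 : α ≤ 2) (hr0 : 0 < r) (hr1 : r ≤ 1) :
    ((α - 1) / α) * ∑' k : ℕ, (k : ℝ) * theta α k * r ^ k = r - r * (1 - r) ^ (α - 1) := by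
  rw [← (hasSum_sizeBiasedTheta_mul_pow hα1 hα2 (by linarith) hr1).tsum_eq, ← tsum_mul_left]
  simp only [sizeBiasedTheta, mul_assoc]
end

section
/- For every real α ∈ (1,2] and every integer k ≥ 3, the tail of the size-biased α-offspring distribution satisfies ((α−1)/α)·∑_{j=k}^∞ j·θ_α(j) = k(k−1)·θ_α(k)/α = (2−α)(3−α)⋯(k−1−α)/(k−2)!. -/
open scoped BigOperators

/-!
Writing `T n := (2−α)(3−α)⋯(n+1−α)/n!` for the claimed tail from `k = n + 2`, one has
`T (n+1) = T n · (1 − (α−1)/(n+1))`, and a direct computation turns the size-biased mass at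
`n + 2` into `T n − T (n+1)`. The tail series therefore telescopes to `T n − lim T`, and
`T n ≤ exp (−(α−1) H_n)` with `H_n` the harmonic numbers forces `lim T = 0` as soon as `α > 1`.
-/

open Finset Filter Topology

theorem hasSum_sub_succ_of_antitone {f : ℕ → ℝ} (hf : Antitone f) {l : ℝ}
    (hl : Tendsto f atTop (𝓝 l)) : HasSum (fun n ↦ f n - f (n + 1)) (f 0 - l) := by
  rw [hasSum_iff_tendsto_nat_of_nonneg fun n ↦ sub_nonneg.2 (hf n.le_succ)]
  simpa only [sum_range_sub'] using tendsto_const_nhds.sub hl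

noncomputable def sizeBiasedTail (α : ℝ) (n : ℕ) : ℝ :=
  (∏ j ∈ Ico 2 (n + 2), ((j : ℝ) - α)) / n.factorial

namespace sizeBiasedTail

variable {α : ℝ}

theorem succ (n : ℕ) :
    sizeBiasedTail α (n + 1) = sizeBiasedTail α n * (1 - (α - 1) / (n + 1)) := by
  rw [sizeBiasedTail, sizeBiasedTail, show n + 1 + 2 = n + 2 + 1 by ring,
    prod_Ico_succ_top (by omega), Nat.factorial_succ]
  push_cast
  field_simp
  ring

theorem eq_prod (n : ℕ) :
    sizeBiasedTail α n = ∏ i ∈ range n, (1 - (α - 1) / (i + 1)) := by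
  induction n with
  | zero => simp [sizeBiasedTail]
  | succ n ih => rw [succ, ih, prod_range_succ]

theorem nonneg (hα : α ≤ 2) (n : ℕ) : 0 ≤ sizeBiasedTail α n :=
  div_nonneg (prod_nonneg fun j hj ↦ by
    have : (2 : ℝ) ≤ j := by exact_mod_cast (mem_Ico.1 hj).1
    linarith) (by positivity)

theorem antitone (hα1 : 1 ≤ α) (hα2 : α ≤ 2) : Antitone (sizeBiasedTail α) := by
  refine antitone_nat_of_succ_le fun n ↦ ?_
  rw [succ]
  refine mul_le_of_le_one_right (nonneg hα2 n) (sub_le_self _ ?_)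
  exact div_nonneg (by linarith) (by positivity)

theorem le_exp (hα : α ≤ 2) (n : ℕ) :
    sizeBiasedTail α n ≤ Real.exp (-(α - 1) * ∑ i ∈ range n, (1 / ((i : ℝ) + 1))) := by
  rw [eq_prod, mul_sum, Real.exp_sum]
  refine prod_le_prod (fun i _ ↦ ?_) fun i _ ↦ ?_
  · rw [sub_nonneg, div_le_one (by positivity)]
    have : (0 : ℝ) ≤ i := i.cast_nonneg
    linarith
  · exact (le_of_eq (by ring)).trans (Real.add_one_le_exp _)

theorem tendsto_zero (hα1 : 1 < α) (hα2 : α ≤ 2) :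
    Tendsto (sizeBiasedTail α) atTop (𝓝 0) := by
  have hexp : Tendsto (fun n ↦ Real.exp (-(α - 1) * ∑ i ∈ range n, (1 / ((i : ℝ) + 1))))
      atTop (𝓝 0) :=
    Real.tendsto_exp_atBot.comp <|
      Real.tendsto_sum_range_one_div_nat_succ_atTop.const_mul_atTop_of_neg (by linarith)
  exact squeeze_zero (nonneg hα2) (le_exp hα2) hexp

theorem eq_mul_theta_div (hα : α ≠ 0) (n : ℕ) :
    sizeBiasedTail α n = ((n + 2 : ℕ) : ℝ) * (((n + 2 : ℕ) : ℝ) - 1) * theta α (n + 2) / α := by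
  rw [sizeBiasedTail, theta, if_neg (by omega), Nat.factorial_succ, Nat.factorial_succ]
  push_cast
  field_simp
  ring

theorem sub_succ (hα : α ≠ 0) (n : ℕ) :
    sizeBiasedTail α n - sizeBiasedTail α (n + 1)
      = (α - 1) / α * (((n + 2 : ℕ) : ℝ) * theta α (n + 2)) := by
  rw [succ, eq_mul_theta_div hα]
  push_cast
  field_simp
  ring

theorem hasSum (hα1 : 1 < α) (hα2 : α ≤ 2) (m : ℕ) :
    HasSum (fun j ↦ (α - 1) / α * (((m + 2 + j : ℕ) : ℝ) * theta α (m + 2 + j)))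
      (sizeBiasedTail α m) := by
  have hα : α ≠ 0 := by positivity
  have h := hasSum_sub_succ_of_antitone (f := fun n ↦ sizeBiasedTail α (n + m))
    (fun a b hab ↦ antitone hα1.le hα2 (by omega))
    ((tendsto_zero hα1 hα2).comp (tendsto_add_atTop_nat m))
  rw [zero_add, sub_zero] at h
  convert h using 2 with j
  rw [add_right_comm j 1 m, add_comm j m, sub_succ hα, add_right_comm]

end sizeBiasedTail

/-- For `α ∈ (1,2]` and integer `k ≥ 3`, the tail of the size-biased `α`-offspring
distribution satisfies
`((α−1)/α) ∑_{j≥k} j θ_α(j) = k(k−1) θ_α(k)/α = (2−α)(3−α)⋯(k−1−α)/(k−2)!`. -/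
theorem stmt_3 (α : ℝ) (hα1 : 1 < α) (hα2 : α ≤ 2) (k : ℕ) (hk : 3 ≤ k) :
    ((α - 1) / α) * ∑' j : ℕ, ((k + j : ℕ) : ℝ) * theta α (k + j)
      = (k : ℝ) * ((k : ℝ) - 1) * theta α k / α ∧
    (k : ℝ) * ((k : ℝ) - 1) * theta α k / α
      = (∏ j ∈ Finset.Ico 2 k, ((j : ℝ) - α)) / (Nat.factorial (k - 2)) := by
  obtain ⟨m, rfl⟩ : ∃ m, k = m + 2 := ⟨k - 2, by omega⟩
  have hclosed := sizeBiasedTail.eq_mul_theta_div (by positivity : α ≠ 0) m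
  rw [Nat.add_sub_cancel]
  constructor
  · rw [← tsum_mul_left, (sizeBiasedTail.hasSum hα1 hα2 m).tsum_eq, hclosed]
  · exact hclosed.symm
end

section
/- Let n ≥ 2 be an integer, v ∈ (0,1), x, y ∈ [1,∞), and let c₂, …, c_n be real numbers with c_i ≥ 1 for each i, and let S := c₂ + ⋯ + c_n be the sum of the n−1 numbers c₂, …, c_n. Then |(v + (1−v)/(x+S))^{−1} − (v + (1−v)/(y+S))^{−1}| ≤ ((1−v)/(1+(n−1)v)²)·|x−y|. -/
open scoped BigOperators

/-- Lipschitz estimate in `x` for `G(v,n,x,(cᵢ)) = (v + (1−v)/(x + c₂ + ⋯ + c_n))⁻¹`: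
for `n ≥ 2`, `v ∈ (0,1)`, `x, y ∈ [1,∞)` and `c₂,…,c_n ∈ [1,∞)`,
`|G(v,n,x,(cᵢ)) − G(v,n,y,(cᵢ))| ≤ (1−v)/(1+(n−1)v)² · |x−y|`. -/
theorem stmt_11 (n : ℕ) (hn : 2 ≤ n) (v x y : ℝ) (hv0 : 0 < v) (hv1 : v < 1)
    (hx : 1 ≤ x) (hy : 1 ≤ y) (c : ℕ → ℝ) (hc : ∀ i, 2 ≤ i → i ≤ n → 1 ≤ c i) :
    |(v + (1 - v) / (x + ∑ i ∈ Finset.Icc 2 n, c i))⁻¹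
        - (v + (1 - v) / (y + ∑ i ∈ Finset.Icc 2 n, c i))⁻¹|
      ≤ (1 - v) / (1 + ((n : ℝ) - 1) * v) ^ 2 * |x - y| := by
  set S := ∑ i ∈ Finset.Icc 2 n, c i with hSdef
  have hn1 : (1 : ℝ) ≤ (n : ℝ) - 1 := by
    have : (2 : ℝ) ≤ (n : ℝ) := by exact_mod_cast hn
    linarith
  have hS : (n : ℝ) - 1 ≤ S := by
    have h1 : ((Finset.Icc 2 n).card : ℝ) * 1 ≤ S := by
      rw [hSdef]
      exact Finset.card_nsmul_le_sum (Finset.Icc 2 n) c 1 (fun i hi => by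
        rw [Finset.mem_Icc] at hi; exact hc i hi.1 hi.2) |>.trans_eq' (by simp)
    have h2 : (Finset.Icc 2 n).card = n - 1 := by
      rw [Nat.card_Icc]; omega
    rw [h2] at h1
    have : ((n - 1 : ℕ) : ℝ) = (n : ℝ) - 1 := by
      have : (1 : ℕ) ≤ n := by omega
      push_cast [Nat.cast_sub this]; ring
    linarith [h1, this.symm.le]
  have hxS : (0 : ℝ) < x + S := by linarith
  have hyS : (0 : ℝ) < y + S := by linarith
  have hDb : (0 : ℝ) < 1 + ((n : ℝ) - 1) * v := by nlinarith
  have hDx : 1 + ((n : ℝ) - 1) * v ≤ v * (x + S) + (1 - v) := by nlinarith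
  have hDy : 1 + ((n : ℝ) - 1) * v ≤ v * (y + S) + (1 - v) := by nlinarith
  have hDxp : (0 : ℝ) < v * (x + S) + (1 - v) := lt_of_lt_of_le hDb hDx
  have hDyp : (0 : ℝ) < v * (y + S) + (1 - v) := lt_of_lt_of_le hDb hDy
  have hAx : v + (1 - v) / (x + S) = (v * (x + S) + (1 - v)) / (x + S) := by
    field_simp
  have hAy : v + (1 - v) / (y + S) = (v * (y + S) + (1 - v)) / (y + S) := by
    field_simp
  have key : (v + (1 - v) / (x + S))⁻¹ - (v + (1 - v) / (y + S))⁻¹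
      = (1 - v) * (x - y) / ((v * (x + S) + (1 - v)) * (v * (y + S) + (1 - v))) := by
    rw [hAx, hAy]
    field_simp
    ring
  rw [key]
  rw [abs_div, abs_mul, abs_of_pos (mul_pos hDxp hDyp), abs_of_pos (by linarith : (0:ℝ) < 1 - v)]
  have h2 : (1 + ((n : ℝ) - 1) * v) ^ 2 ≤ (v * (x + S) + (1 - v)) * (v * (y + S) + (1 - v)) := by
    calc (1 + ((n : ℝ) - 1) * v) ^ 2 = (1 + ((n : ℝ) - 1) * v) * (1 + ((n : ℝ) - 1) * v) := sq _
      _ ≤ _ := mul_le_mul hDx hDy hDb.le hDxp.le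
  calc (1 - v) * |x - y| / ((v * (x + S) + (1 - v)) * (v * (y + S) + (1 - v)))
      ≤ (1 - v) * |x - y| / (1 + ((n : ℝ) - 1) * v) ^ 2 := by
        apply div_le_div_of_nonneg_left _ (by positivity) h2
        exact mul_nonneg (by linarith) (abs_nonneg _)
    _ = (1 - v) / (1 + ((n : ℝ) - 1) * v) ^ 2 * |x - y| := by ring
end

section
/- Let (q_n)_{n≥1} be a sequence in (0,1) with q_n → 0 and n·q_n^{α−1}·L(q_n) → 1/(α−1) as n → ∞. Then n·(1 − ∑_{k=1}^∞ k·ρ(k)·(1−q_n)^{k−1}) → α/(α−1) as n → ∞; equivalently, ∑_{k=1}^∞ k·ρ(k)·(1−q_n)^{k−1} = 1 − α/((α−1)·n) + o(1/n). -/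
/-!
Write `F` for the generating function of `ρ` and `G x = F (1 - x) - (1 - x) = x ^ α * L x`.
`G` is convex with derivative `1 - F' (1 - x)`, so this derivative is squeezed between the
difference quotients of `G` over `[c x, x]` (for `c < 1`) and over `[x, c x]` (for `c > 1`).
Since `L` is slowly varying these quotients are `≈ (c ^ α - 1) / (c - 1) * G x / x`, and letting
`c → 1` gives `x G' x / G x → α` (the monotone density argument). Along `x = q n` this ratio is
`n (1 - F' (1 - q n))` divided by `n q n ^ (α - 1) L (q n) → 1 / (α - 1)`; the latter limit also
makes `G (q n)` eventually positive.
-/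

open Filter Topology Set

lemma natCast_mul_pow_mul_sub_le_pow_sub_pow {s t : ℝ} (hs : 0 ≤ s) (hst : s ≤ t) (k : ℕ) :
    (k : ℝ) * s ^ (k - 1) * (t - s) ≤ t ^ k - s ^ k := by
  rcases k with _ | m
  · simp
  rw [← geom_sum₂_mul, Nat.add_sub_cancel]
  gcongr ?_ * _
  calc ((m + 1 : ℕ) : ℝ) * s ^ m = ∑ _i ∈ Finset.range (m + 1), s ^ m := by simp
    _ ≤ ∑ i ∈ Finset.range (m + 1), t ^ i * s ^ (m - i) := by
      refine Finset.sum_le_sum fun i hi => ?_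
      rw [← pow_mul_pow_sub s (Finset.mem_range_succ_iff.1 hi)]
      gcongr

lemma pow_sub_pow_le_natCast_mul_pow_mul_sub {s t : ℝ} (hs : 0 ≤ s) (hst : s ≤ t) (k : ℕ) :
    t ^ k - s ^ k ≤ (k : ℝ) * t ^ (k - 1) * (t - s) := by
  rcases k with _ | m
  · simp
  rw [← geom_sum₂_mul, Nat.add_sub_cancel]
  gcongr ?_ * _
  calc ∑ i ∈ Finset.range (m + 1), t ^ i * s ^ (m - i)
    _ ≤ ∑ _i ∈ Finset.range (m + 1), t ^ m := by
      refine Finset.sum_le_sum fun i hi => ?_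
      rw [← pow_mul_pow_sub t (Finset.mem_range_succ_iff.1 hi)]
      have := hs.trans hst
      gcongr
    _ = ((m + 1 : ℕ) : ℝ) * t ^ m := by simp

lemma tendsto_rpow_sub_one_div_sub_one (α : ℝ) :
    Tendsto (fun c : ℝ => (c ^ α - 1) / (c - 1)) (𝓝[≠] 1) (𝓝 α) := by
  have hd : HasDerivAt (fun c : ℝ => c ^ α) α 1 := by
    simpa using Real.hasDerivAt_rpow_const (x := 1) (p := α) (Or.inl one_ne_zero)
  refine (hasDerivAt_iff_tendsto_slope.mp hd).congr fun c => ?_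
  simp [slope_def_field]

noncomputable def pgf (ρ : ℕ → ℝ) (s : ℝ) : ℝ := ∑' k, ρ k * s ^ k

noncomputable def pgfDeriv (ρ : ℕ → ℝ) (s : ℝ) : ℝ := ∑' k : ℕ, (k : ℝ) * ρ k * s ^ (k - 1)

section GeneratingFunction

variable {ρ : ℕ → ℝ} {s t : ℝ}

lemma summable_mul_pow_of_le_one (hρ0 : ∀ k, 0 ≤ ρ k) (hρ : Summable ρ) (hs : 0 ≤ s)
    (hs1 : s ≤ 1) : Summable fun k => ρ k * s ^ k :=
  hρ.of_nonneg_of_le (fun k => mul_nonneg (hρ0 k) (pow_nonneg hs k))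
    fun k => mul_le_of_le_one_right (hρ0 k) (pow_le_one₀ hs hs1)

lemma summable_natCast_mul_mul_pow_of_le_one (hρ0 : ∀ k, 0 ≤ ρ k)
    (hρ : Summable fun k : ℕ => (k : ℝ) * ρ k) (hs : 0 ≤ s) (hs1 : s ≤ 1) :
    Summable fun k : ℕ => (k : ℝ) * ρ k * s ^ (k - 1) :=
  hρ.of_nonneg_of_le (fun k => by have := hρ0 k; positivity)
    fun k => mul_le_of_le_one_right (by have := hρ0 k; positivity) (pow_le_one₀ hs hs1)

lemma pgfDeriv_mul_sub_le_pgf_sub_pgf (hρ0 : ∀ k, 0 ≤ ρ k) (hρ : Summable ρ)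
    (hρ' : Summable fun k : ℕ => (k : ℝ) * ρ k) (hs : 0 ≤ s) (hst : s ≤ t) (ht : t ≤ 1) :
    pgfDeriv ρ s * (t - s) ≤ pgf ρ t - pgf ρ s := by
  have hs1 := hst.trans ht
  refine hasSum_le (fun k => ?_)
    ((summable_natCast_mul_mul_pow_of_le_one hρ0 hρ' hs hs1).hasSum.mul_right _)
    ((summable_mul_pow_of_le_one hρ0 hρ (hs.trans hst) ht).hasSum.sub
      (summable_mul_pow_of_le_one hρ0 hρ hs hs1).hasSum)
  calc (k : ℝ) * ρ k * s ^ (k - 1) * (t - s) = ρ k * ((k : ℝ) * s ^ (k - 1) * (t - s)) := by ring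
    _ ≤ ρ k * (t ^ k - s ^ k) :=
      mul_le_mul_of_nonneg_left (natCast_mul_pow_mul_sub_le_pow_sub_pow hs hst k) (hρ0 k)
    _ = ρ k * t ^ k - ρ k * s ^ k := by ring

lemma pgf_sub_pgf_le_pgfDeriv_mul_sub (hρ0 : ∀ k, 0 ≤ ρ k) (hρ : Summable ρ)
    (hρ' : Summable fun k : ℕ => (k : ℝ) * ρ k) (hs : 0 ≤ s) (hst : s ≤ t) (ht : t ≤ 1) :
    pgf ρ t - pgf ρ s ≤ pgfDeriv ρ t * (t - s) := by
  have hs1 := hst.trans ht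
  refine hasSum_le (fun k => ?_)
    ((summable_mul_pow_of_le_one hρ0 hρ (hs.trans hst) ht).hasSum.sub
      (summable_mul_pow_of_le_one hρ0 hρ hs hs1).hasSum)
    ((summable_natCast_mul_mul_pow_of_le_one hρ0 hρ' (hs.trans hst) ht).hasSum.mul_right _)
  calc ρ k * t ^ k - ρ k * s ^ k = ρ k * (t ^ k - s ^ k) := by ring
    _ ≤ ρ k * ((k : ℝ) * t ^ (k - 1) * (t - s)) :=
      mul_le_mul_of_nonneg_left (pow_sub_pow_le_natCast_mul_pow_mul_sub hs hst k) (hρ0 k)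
    _ = (k : ℝ) * ρ k * t ^ (k - 1) * (t - s) := by ring

end GeneratingFunction

section MonotoneDensity

variable {g h : ℝ → ℝ} {α ε c x : ℝ}

lemma mul_div_le_of_secant_of_one_lt
    (hlo : ∀ x y, 0 < x → x ≤ y → y < ε → h x * (y - x) ≤ g y - g x)
    (hc : 1 < c) (hx : 0 < x) (hcx : c * x < ε) (hg : 0 < g x) :
    x * h x / g x ≤ (g (c * x) / g x - 1) / (c - 1) := by
  have := hlo x (c * x) hx (by nlinarith) hcx
  rw [div_sub_one hg.ne', div_div, div_le_div_iff₀ hg (by nlinarith)]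
  nlinarith [mul_le_mul_of_nonneg_left this hg.le]

lemma le_mul_div_of_secant_of_lt_one
    (hhi : ∀ x y, 0 < x → x ≤ y → y < ε → g y - g x ≤ h y * (y - x))
    (hc0 : 0 < c) (hc1 : c < 1) (hx : 0 < x) (hxε : x < ε) (hg : 0 < g x) :
    (g (c * x) / g x - 1) / (c - 1) ≤ x * h x / g x := by
  have := hhi (c * x) x (by positivity) (by nlinarith) hxε
  rw [← neg_div_neg_eq, neg_sub, neg_sub, one_sub_div hg.ne', div_div,
    div_le_div_iff₀ (by nlinarith) hg]
  nlinarith [mul_le_mul_of_nonneg_left this hg.le]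

theorem tendsto_mul_div_of_secant_bounds {l : Filter ℝ} (hl : l ≤ 𝓝[>] 0) (hε : 0 < ε)
    (hreg : ∀ c, 0 < c → Tendsto (fun x => g (c * x) / g x) (𝓝[>] 0) (𝓝 (c ^ α)))
    (hlo : ∀ x y, 0 < x → x ≤ y → y < ε → h x * (y - x) ≤ g y - g x)
    (hhi : ∀ x y, 0 < x → x ≤ y → y < ε → g y - g x ≤ h y * (y - x))
    (hpos : ∀ᶠ x in l, 0 < g x) :
    Tendsto (fun x => x * h x / g x) l (𝓝 α) := by
  have hsecant : ∀ c, 0 < c → Tendsto (fun x => (g (c * x) / g x - 1) / (c - 1)) l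
      (𝓝 ((c ^ α - 1) / (c - 1))) := fun c hc =>
    (((hreg c hc).mono_left hl).sub_const 1).div_const _
  have hsmall : ∀ δ, 0 < δ → ∀ᶠ x in l, 0 < x ∧ x < δ := fun δ hδ =>
    hl (inter_mem_nhdsWithin _ (Iio_mem_nhds hδ))
  have hslope := tendsto_rpow_sub_one_div_sub_one α
  refine tendsto_order.2 ⟨fun b hb => ?_, fun b hb => ?_⟩
  · obtain ⟨c, hcb, hc0, hc1⟩ : ∃ c, b < (c ^ α - 1) / (c - 1) ∧ 0 < c ∧ c < 1 :=
      (((hslope.mono_left (nhdsWithin_mono 1 fun _ (hc : _ ∈ Iio 1) => hc.ne)).eventually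
        (eventually_gt_nhds hb)).and (Ioo_mem_nhdsLT zero_lt_one)).exists
    filter_upwards [(hsecant c hc0).eventually (eventually_gt_nhds hcb), hsmall ε hε, hpos]
      with x hbx ⟨hx, hxε⟩ hgx
    exact hbx.trans_le (le_mul_div_of_secant_of_lt_one hhi hc0 hc1 hx hxε hgx)
  · obtain ⟨c, hcb, hc1⟩ : ∃ c, (c ^ α - 1) / (c - 1) < b ∧ 1 < c :=
      (((hslope.mono_left (nhdsWithin_mono 1 fun _ (hc : _ ∈ Ioi 1) => hc.ne')).eventually
        (eventually_lt_nhds hb)).and self_mem_nhdsWithin).exists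
    have hc0 : 0 < c := one_pos.trans hc1
    filter_upwards [(hsecant c hc0).eventually (eventually_lt_nhds hcb),
      hsmall (ε / c) (div_pos hε hc0), hpos] with x hbx ⟨hx, hxε⟩ hgx
    have hcx : c * x < ε := by rwa [lt_div_iff₀' hc0] at hxε
    exact (mul_div_le_of_secant_of_one_lt hlo hc1 hx hcx hgx).trans_lt hbx

end MonotoneDensity

lemma tendsto_div_of_eq_rpow_mul {g L : ℝ → ℝ} {α ε c : ℝ} (hε : 0 < ε) (hc : 0 < c)
    (hg : ∀ x ∈ Ioo 0 ε, g x = x ^ α * L x)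
    (hslow : Tendsto (fun x => L (c * x) / L x) (𝓝[>] 0) (𝓝 1)) :
    Tendsto (fun x => g (c * x) / g x) (𝓝[>] 0) (𝓝 (c ^ α)) := by
  rw [← mul_one (c ^ α)]
  refine (hslow.const_mul _).congr' ?_
  filter_upwards [inter_mem_nhdsWithin (Ioi 0) (Iio_mem_nhds (lt_min hε (div_pos hε hc)))]
    with x ⟨hx, hxε⟩
  have hxε' : x < ε := hxε.out.trans_le (min_le_left _ _)
  have hcxε : c * x < ε := by
    have := hxε.out.trans_le (min_le_right _ _); rwa [lt_div_iff₀' hc] at this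
  have hxα : x ^ α ≠ 0 := (Real.rpow_pos_of_pos hx _).ne'
  rw [hg x ⟨hx, hxε'⟩, hg (c * x) ⟨mul_pos hc hx, hcxε⟩, Real.mul_rpow hc.le hx.out.le,
    mul_assoc, mul_div_assoc, mul_div_mul_left _ _ hxα]

theorem stmt_16_general (ρ : ℕ → ℝ) (hρ0 : ∀ k, 0 ≤ ρ k) (hρsum : ∑' k : ℕ, ρ k = 1)
    (hmean : ∑' k : ℕ, (k : ℝ) * ρ k = 1)
    (α : ℝ) (hα1 : 1 < α) (L : ℝ → ℝ)
    (hL : ∀ x ∈ Set.Ioo (0 : ℝ) 1,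
      L x = ((∑' k : ℕ, ρ k * (1 - x) ^ k) - (1 - x)) / x ^ α)
    (hslow : ∀ c : ℝ, 0 < c →
      Filter.Tendsto (fun x : ℝ => L (c * x) / L x) (nhdsWithin 0 (Set.Ioi 0)) (nhds 1))
    (q : ℕ → ℝ) (hq : ∀ n, 1 ≤ n → q n ∈ Set.Ioo (0 : ℝ) 1)
    (hq0 : Filter.Tendsto q Filter.atTop (nhds 0))
    (hqL : Filter.Tendsto (fun n : ℕ => (n : ℝ) * q n ^ (α - 1) * L (q n))
      Filter.atTop (nhds (1 / (α - 1)))) :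
    Filter.Tendsto
      (fun n : ℕ => (n : ℝ) * (1 - ∑' k : ℕ, (k : ℝ) * ρ k * (1 - q n) ^ (k - 1)))
      Filter.atTop (nhds (α / (α - 1))) := by
  have hρ : Summable ρ := by
    by_contra h; simp [tsum_eq_zero_of_not_summable h] at hρsum
  have hρ' : Summable fun k : ℕ => (k : ℝ) * ρ k := by
    by_contra h; simp [tsum_eq_zero_of_not_summable h] at hmean
  set g : ℝ → ℝ := fun x => pgf ρ (1 - x) - (1 - x)
  set h : ℝ → ℝ := fun x => 1 - pgfDeriv ρ (1 - x)
  have hg : ∀ x ∈ Ioo 0 1, g x = x ^ α * L x := fun x hx => by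
    rw [hL x hx, mul_div_cancel₀ _ (Real.rpow_pos_of_pos hx.1 _).ne']; rfl
  have hlo : ∀ x y, 0 < x → x ≤ y → y < 1 → h x * (y - x) ≤ g y - g x := fun x y hx hxy hy => by
    have := pgf_sub_pgf_le_pgfDeriv_mul_sub hρ0 hρ hρ' (s := 1 - y) (t := 1 - x)
      (by linarith) (by linarith) (by linarith)
    simp only [g, h]; linarith
  have hhi : ∀ x y, 0 < x → x ≤ y → y < 1 → g y - g x ≤ h y * (y - x) := fun x y hx hxy hy => by
    have := pgfDeriv_mul_sub_le_pgf_sub_pgf hρ0 hρ hρ' (s := 1 - y) (t := 1 - x)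
      (by linarith) (by linarith) (by linarith)
    simp only [g, h]; linarith
  have hql : Tendsto q atTop (𝓝[>] 0) :=
    tendsto_nhdsWithin_iff.2 ⟨hq0, eventually_atTop.2 ⟨1, fun n hn => (hq n hn).1⟩⟩
  have hLq : ∀ᶠ n in atTop, 1 ≤ n ∧ 0 < L (q n) := by
    filter_upwards [eventually_ge_atTop 1, hqL.eventually (eventually_gt_nhds
      (one_div_pos.2 (sub_pos.2 hα1)))] with n hn hpos
    exact ⟨hn, pos_of_mul_pos_right hpos (by have := (hq n hn).1; positivity)⟩
  have hratio : Tendsto (fun n => q n * h (q n) / g (q n)) atTop (𝓝 α) :=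
    (tendsto_mul_div_of_secant_bounds hql one_pos
      (fun c hc => tendsto_div_of_eq_rpow_mul one_pos hc hg (hslow c hc)) hlo hhi
      (eventually_map.2 (hLq.mono fun n ⟨hn, hLn⟩ => by
        rw [hg _ (hq n hn)]; have := (hq n hn).1; positivity))).comp tendsto_map
  rw [show α / (α - 1) = 1 / (α - 1) * α by ring]
  refine (hqL.mul hratio).congr' (hLq.mono fun n ⟨hn, hLn⟩ => ?_)
  have hqn := (hq n hn).1
  simp only [hg _ (hq n hn), h, pgfDeriv, Real.rpow_sub_one hqn.ne']
  field_simp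

/-- If `q_n ∈ (0,1)`, `q_n → 0` and `n q_n^{α−1} L(q_n) → 1/(α−1)`, then
`n (1 − ∑_{k≥1} k ρ(k) (1−q_n)^{k−1}) → α/(α−1)` as `n → ∞`. -/
theorem stmt_16 (ρ : ℕ → ℝ) (hρ0 : ∀ k, 0 ≤ ρ k) (hρsum : ∑' k : ℕ, ρ k = 1)
    (hmean : ∑' k : ℕ, (k : ℝ) * ρ k = 1) (hρ1 : ρ 1 ≠ 1)
    (α : ℝ) (hα1 : 1 < α) (hα2 : α ≤ 2) (L : ℝ → ℝ)
    (hL : ∀ x ∈ Set.Ioo (0 : ℝ) 1,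
      L x = ((∑' k : ℕ, ρ k * (1 - x) ^ k) - (1 - x)) / x ^ α)
    (hslow : ∀ c : ℝ, 0 < c →
      Filter.Tendsto (fun x : ℝ => L (c * x) / L x) (nhdsWithin 0 (Set.Ioi 0)) (nhds 1))
    (q : ℕ → ℝ) (hq : ∀ n, 1 ≤ n → q n ∈ Set.Ioo (0 : ℝ) 1)
    (hq0 : Filter.Tendsto q Filter.atTop (nhds 0))
    (hqL : Filter.Tendsto (fun n : ℕ => (n : ℝ) * q n ^ (α - 1) * L (q n))
      Filter.atTop (nhds (1 / (α - 1)))) :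
    Filter.Tendsto
      (fun n : ℕ => (n : ℝ) * (1 - ∑' k : ℕ, (k : ℝ) * ρ k * (1 - q n) ^ (k - 1)))
      Filter.atTop (nhds (α / (α - 1))) :=
  stmt_16_general ρ hρ0 hρsum hmean α hα1 L hL hslow q hq hq0 hqL
end

section
/- Define g(s) := ∑_{k=1}^∞ k·ρ(k)·s^{k−1} for s ∈ [0,1]. Then for every fixed r ∈ (0,1), one has (g(1 − x(1−r)) − g(1−x))/(1 − g(1−x)) → 1 − (1−r)^{α−1} as x → 0⁺ (the denominator being nonzero for all sufficiently small x > 0). -/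
/-!
Let `f` be the generating function of `ρ`, `M(x) = f(1 - x) - (1 - x) = x^α L(x)` and
`D(x) = 1 - g(1 - x) = M'(x)`, so that the quotient is `1 - D((1 - r)x) / D(x)`. Since `L` is
slowly varying, `M` is regularly varying of index `α` at `0⁺`, and `D` is monotone because `g` is.
The monotone density theorem then gives `x D(x) / M(x) → α`: by the mean value theorem the
slopes of `M` on `[μx, x]` and `[x, μx]` bound `D(x)`, and their normalised limits
`(μ^α - 1) / (μ - 1)` tend to `α` as `μ → 1`. Hence `D` is regularly varying of index `α - 1`.
`M` and `D` are positive near `0` because `ρ` charges some `k ≥ 2`.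
-/

open Filter Set Topology

section Squeeze

variable {X ι 𝕜 : Type*} [TopologicalSpace 𝕜] [LinearOrder 𝕜] [OrderTopology 𝕜]

theorem tendsto_of_eventually_le_of_eventually_ge {l : Filter X} {p q : Filter ι} [p.NeBot]
    [q.NeBot] {f : X → 𝕜} {b : ι → X → 𝕜} {a : ι → 𝕜} {c : 𝕜}
    (hb : ∀ᶠ i in p ⊔ q, Tendsto (b i) l (𝓝 (a i))) (ha : Tendsto a (p ⊔ q) (𝓝 c))
    (hlower : ∀ᶠ i in p, ∀ᶠ x in l, b i x ≤ f x) (hupper : ∀ᶠ i in q, ∀ᶠ x in l, f x ≤ b i x) :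
    Tendsto f l (𝓝 c) := by
  rw [eventually_sup] at hb
  refine tendsto_order.2 ⟨fun c' hc' => ?_, fun c' hc' => ?_⟩
  · obtain ⟨i, hbi, hai, hi⟩ :=
      (hb.1.and (((ha.mono_left le_sup_left).eventually (lt_mem_nhds hc')).and hlower)).exists
    filter_upwards [hbi.eventually (lt_mem_nhds hai), hi] with x h₁ h₂ using h₁.trans_le h₂
  · obtain ⟨i, hbi, hai, hi⟩ :=
      (hb.2.and (((ha.mono_left le_sup_right).eventually (gt_mem_nhds hc')).and hupper)).exists
    filter_upwards [hbi.eventually (gt_mem_nhds hai), hi] with x h₁ h₂ using h₂.trans_lt h₁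

end Squeeze

theorem mul_sub_le_sub_and_sub_le_mul_of_monotoneOn {M D : ℝ → ℝ} {a b : ℝ} (hab : a ≤ b)
    (hM : ∀ x ∈ Icc a b, HasDerivAt M (D x) x) (hD : MonotoneOn D (Icc a b)) :
    D a * (b - a) ≤ M b - M a ∧ M b - M a ≤ D b * (b - a) := by
  have hcont : ContinuousOn M (Icc a b) := fun x hx => (hM x hx).continuousAt.continuousWithinAt
  have hdiff : DifferentiableOn ℝ M (interior (Icc a b)) := fun x hx =>
    (hM x (interior_subset hx)).differentiableAt.differentiableWithinAt
  have hderiv : ∀ x ∈ interior (Icc a b), deriv M x = D x := fun x hx =>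
    (hM x (interior_subset hx)).deriv
  have ha : a ∈ Icc a b := left_mem_Icc.2 hab
  have hb : b ∈ Icc a b := right_mem_Icc.2 hab
  constructor
  · refine (convex_Icc a b).mul_sub_le_image_sub_of_le_deriv hcont hdiff (fun x hx => ?_)
      a ha b hb hab
    rw [hderiv x hx]
    exact hD ha (interior_subset hx) (interior_subset hx).1
  · refine (convex_Icc a b).image_sub_le_mul_sub_of_deriv_le hcont hdiff (fun x hx => ?_)
      a ha b hb hab
    rw [hderiv x hx]
    exact hD (interior_subset hx) hb (interior_subset hx).2

theorem tendsto_const_mul_nhdsGT_zero {c : ℝ} (hc : 0 < c) :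
    Tendsto (c * ·) (𝓝[>] 0) (𝓝[>] 0) :=
  tendsto_comap.mono_left (comap_mulLeft_nhdsGT_zero hc).ge

theorem tendsto_div_rpow_of_slowlyVarying {M L : ℝ → ℝ} {α c : ℝ} (hc : 0 < c)
    (hML : ∀ᶠ x in 𝓝[>] 0, M x = x ^ α * L x)
    (hL : Tendsto (fun x => L (c * x) / L x) (𝓝[>] 0) (𝓝 1)) :
    Tendsto (fun x => M (c * x) / M x) (𝓝[>] 0) (𝓝 (c ^ α)) := by
  have hlim := hL.const_mul (c ^ α)
  rw [mul_one] at hlim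
  refine hlim.congr' ?_
  filter_upwards [hML, tendsto_const_mul_nhdsGT_zero hc hML, self_mem_nhdsWithin]
    with x hx hcx (hx0 : 0 < x)
  rw [hx, hcx, Real.mul_rpow hc.le hx0.le, mul_assoc, mul_div_assoc,
    mul_div_mul_left _ _ (Real.rpow_pos_of_pos hx0 α).ne']

section MonotoneDensity

variable {M D : ℝ → ℝ} {δ : ℝ} (hM : ∀ x ∈ Ioo 0 δ, HasDerivAt M (D x) x)
  (hD : MonotoneOn D (Ioo 0 δ)) (hMpos : ∀ x ∈ Ioo 0 δ, 0 < M x)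
include hM hD hMpos

theorem mul_deriv_div_le_of_one_lt {μ x : ℝ} (hμ : 1 < μ) (hx : 0 < x) (hμx : μ * x < δ) :
    x * D x / M x ≤ (M (μ * x) / M x - 1) / (μ - 1) := by
  have hsub : Icc x (μ * x) ⊆ Ioo 0 δ := Icc_subset_Ioo hx hμx
  have hx' : x ∈ Ioo 0 δ := hsub (left_mem_Icc.2 (by nlinarith))
  have hMx := hMpos x hx'
  have key := (mul_sub_le_sub_and_sub_le_mul_of_monotoneOn (by nlinarith)
    (fun y hy => hM y (hsub hy)) (hD.mono hsub)).1
  rw [div_le_div_iff₀ hMx (by linarith), div_sub_one hMx.ne', div_mul_eq_mul_div,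
    le_div_iff₀ hMx]
  nlinarith

theorem le_mul_deriv_div_of_lt_one {μ x : ℝ} (hμ0 : 0 < μ) (hμ1 : μ < 1) (hx : x ∈ Ioo 0 δ) :
    (M (μ * x) / M x - 1) / (μ - 1) ≤ x * D x / M x := by
  have hsub : Icc (μ * x) x ⊆ Ioo 0 δ := Icc_subset_Ioo (mul_pos hμ0 hx.1) hx.2
  have hMx := hMpos x hx
  have key := (mul_sub_le_sub_and_sub_le_mul_of_monotoneOn (by nlinarith [hx.1])
    (fun y hy => hM y (hsub hy)) (hD.mono hsub)).2
  rw [← neg_div_neg_eq, div_le_div_iff₀ (by linarith) hMx, neg_sub, sub_div' hMx.ne',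
    div_mul_eq_mul_div, div_le_iff₀ hMx]
  nlinarith

/-- The monotone density theorem. -/
theorem tendsto_mul_deriv_div_of_monotoneOn (hδ : 0 < δ) {α : ℝ}
    (hreg : ∀ μ, 0 < μ → Tendsto (fun x => M (μ * x) / M x) (𝓝[>] 0) (𝓝 (μ ^ α))) :
    Tendsto (fun x => x * D x / M x) (𝓝[>] 0) (𝓝 α) := by
  have hslope : Tendsto (slope (fun t : ℝ => t ^ α) 1) (𝓝[<] 1 ⊔ 𝓝[>] 1) (𝓝 α) := by
    rw [nhdsLT_sup_nhdsGT, ← hasDerivAt_iff_tendsto_slope]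
    simpa using Real.hasDerivAt_rpow_const (x := 1) (p := α) (Or.inl one_ne_zero)
  have hpos : ∀ᶠ μ in 𝓝[<] (1 : ℝ) ⊔ 𝓝[>] 1, 0 < μ :=
    (nhdsLT_sup_nhdsGT (1 : ℝ)).symm ▸ eventually_nhdsWithin_of_eventually_nhds
      (lt_mem_nhds one_pos)
  refine tendsto_of_eventually_le_of_eventually_ge (b := fun μ x => (M (μ * x) / M x - 1) / (μ - 1))
    ?_ hslope ?_ ?_
  · filter_upwards [hpos] with μ hμ
    rw [slope_def_field, Real.one_rpow]
    exact ((hreg μ hμ).sub_const 1).div_const _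
  · filter_upwards [Ioo_mem_nhdsLT one_pos] with μ hμ
    filter_upwards [Ioo_mem_nhdsGT hδ] with x hx
    exact le_mul_deriv_div_of_lt_one hM hD hMpos hμ.1 hμ.2 hx
  · filter_upwards [self_mem_nhdsWithin] with μ (hμ : 1 < μ)
    filter_upwards [Ioo_mem_nhdsGT (div_pos hδ (by linarith : (0 : ℝ) < μ))] with x hx
    exact mul_deriv_div_le_of_one_lt hM hD hMpos hμ hx.1
      ((lt_div_iff₀' (by linarith)).1 hx.2)

theorem tendsto_deriv_div_of_monotoneOn (hδ : 0 < δ) {α c : ℝ} (hα : α ≠ 0) (hc : 0 < c)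
    (hreg : ∀ μ, 0 < μ → Tendsto (fun x => M (μ * x) / M x) (𝓝[>] 0) (𝓝 (μ ^ α))) :
    Tendsto (fun x => D (c * x) / D x) (𝓝[>] 0) (𝓝 (c ^ (α - 1))) := by
  set T := fun x => x * D x / M x
  have hT := tendsto_mul_deriv_div_of_monotoneOn hM hD hMpos hδ hreg
  have hlim : Tendsto (fun x => T (c * x) * (M (c * x) / M x) / (T x * c)) (𝓝[>] 0)
      (𝓝 (α * c ^ α / (α * c))) :=
    ((hT.comp (tendsto_const_mul_nhdsGT_zero hc)).mul (hreg c hc)).div (hT.mul_const c)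
      (mul_ne_zero hα hc.ne')
  rw [mul_div_mul_left _ _ hα, ← Real.rpow_sub_one hc.ne'] at hlim
  refine hlim.congr' ?_
  filter_upwards [Ioo_mem_nhdsGT hδ, Ioo_mem_nhdsGT (div_pos hδ hc)] with x hx hcx
  have hcx' : c * x ∈ Ioo 0 δ := ⟨mul_pos hc hx.1, (lt_div_iff₀' hc).1 hcx.2⟩
  have hMx := (hMpos x hx).ne'
  have hMcx := (hMpos _ hcx').ne'
  have hx0 := hx.1.ne'
  rcases eq_or_ne (D x) 0 with hDx | hDx
  · simp [T, hDx]
  · simp only [T]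
    field_simp

end MonotoneDensity

theorem summable_of_tsum_ne_zero {ι : Type*} {f : ι → ℝ} (h : ∑' i, f i ≠ 0) : Summable f := by
  by_contra hf
  exact h (tsum_eq_zero_of_not_summable hf)

theorem one_add_mul_sub_lt_pow {a : ℝ} (ha0 : 0 ≤ a) (ha1 : a ≠ 1) {n : ℕ} (hn : 2 ≤ n) :
    1 + n * (a - 1) < a ^ n := by
  obtain ⟨m, rfl⟩ := Nat.exists_eq_add_of_le' (by omega : 1 ≤ n)
  have hbern := one_add_mul_sub_le_pow (by linarith : -1 ≤ a) m
  have hm : (1 : ℝ) ≤ m := by exact_mod_cast (by omega : 1 ≤ m)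
  have hsq : 0 < (a - 1) ^ 2 := by positivity
  rw [pow_succ]
  push_cast
  nlinarith [mul_le_mul_of_nonneg_right hbern ha0]

theorem summable_mul_pow_of_le_one_s18 {a : ℕ → ℝ} (ha0 : ∀ k, 0 ≤ a k) (ha : Summable a)
    (e : ℕ → ℕ) {s : ℝ} (hs0 : 0 ≤ s) (hs1 : s ≤ 1) : Summable fun k => a k * s ^ e k :=
  ha.of_nonneg_of_le (fun k => mul_nonneg (ha0 k) (pow_nonneg hs0 _))
    (fun k => mul_le_of_le_one_right (ha0 k) (pow_le_one₀ hs0 hs1))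

section GeneratingFunction

variable {ρ : ℕ → ℝ} (hρ0 : ∀ k, 0 ≤ ρ k)
include hρ0

theorem exists_two_le_pos_of_tsum_natCast_mul_eq_one (hmean : ∑' k : ℕ, (k : ℝ) * ρ k = 1)
    (hρ1 : ρ 1 ≠ 1) : ∃ k, 2 ≤ k ∧ 0 < ρ k := by
  by_contra! h
  refine hρ1 ?_
  rw [← hmean, tsum_eq_single 1 fun k hk => ?_, Nat.cast_one, one_mul]
  rcases Nat.lt_or_gt_of_ne hk with hk | hk
  · simp [Nat.lt_one_iff.1 hk]
  · simp [le_antisymm (h k hk) (hρ0 k)]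

theorem hasDerivAt_tsum_mul_pow (hS1 : Summable fun k : ℕ => (k : ℝ) * ρ k) {s : ℝ}
    (hs : s ∈ Ioo (-1) 1) :
    HasDerivAt (fun t => ∑' k, ρ k * t ^ k) (∑' k : ℕ, (k : ℝ) * ρ k * s ^ (k - 1)) s := by
  refine hasDerivAt_tsum_of_isPreconnected (g := fun (k : ℕ) (t : ℝ) => ρ k * t ^ k)
    (g' := fun k t => (k : ℝ) * ρ k * t ^ (k - 1)) hS1 isOpen_Ioo isPreconnected_Ioo
    (fun k t _ => ?_) (fun k t ht => ?_) (y₀ := 0) (by norm_num) ?_ hs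
  · simpa [mul_comm, mul_assoc] using (hasDerivAt_pow k t).const_mul (ρ k)
  · rw [norm_mul, norm_pow, Real.norm_of_nonneg (mul_nonneg k.cast_nonneg (hρ0 k))]
    exact mul_le_of_le_one_right (mul_nonneg k.cast_nonneg (hρ0 k))
      (pow_le_one₀ (norm_nonneg t) (abs_le.2 ⟨ht.1.le, ht.2.le⟩))
  · exact summable_of_ne_finset_zero (s := {0}) fun k hk => by simp_all

theorem tsum_natCast_mul_pow_le (hS1 : Summable fun k : ℕ => (k : ℝ) * ρ k) {s t : ℝ}
    (hs : 0 ≤ s) (hst : s ≤ t) (ht : t ≤ 1) :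
    ∑' k : ℕ, (k : ℝ) * ρ k * s ^ (k - 1) ≤ ∑' k : ℕ, (k : ℝ) * ρ k * t ^ (k - 1) := by
  have hρ0' (k : ℕ) : 0 ≤ (k : ℝ) * ρ k := mul_nonneg k.cast_nonneg (hρ0 k)
  exact Summable.tsum_le_tsum
    (fun k => mul_le_mul_of_nonneg_left (pow_le_pow_left₀ hs hst _) (hρ0' k))
    (summable_mul_pow_of_le_one_s18 hρ0' hS1 _ hs (hst.trans ht))
    (summable_mul_pow_of_le_one_s18 hρ0' hS1 _ (hs.trans hst) ht)

variable {k₀ : ℕ} (hk₀ : 2 ≤ k₀) (hρk₀ : 0 < ρ k₀)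
include hk₀ hρk₀

theorem tsum_natCast_mul_pow_lt_one (hmean : ∑' k : ℕ, (k : ℝ) * ρ k = 1) {s : ℝ} (hs0 : 0 ≤ s)
    (hs1 : s < 1) : ∑' k : ℕ, (k : ℝ) * ρ k * s ^ (k - 1) < 1 := by
  have hρ0' (k : ℕ) : 0 ≤ (k : ℝ) * ρ k := mul_nonneg k.cast_nonneg (hρ0 k)
  have hS1 := summable_of_tsum_ne_zero (hmean ▸ one_ne_zero)
  calc ∑' k : ℕ, (k : ℝ) * ρ k * s ^ (k - 1) < ∑' k : ℕ, (k : ℝ) * ρ k := by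
        refine Summable.tsum_lt_tsum (i := k₀)
          (fun k => mul_le_of_le_one_right (hρ0' k) (pow_le_one₀ hs0 hs1.le)) ?_
          (summable_mul_pow_of_le_one_s18 hρ0' hS1 _ hs0 hs1.le) hS1
        exact mul_lt_of_lt_one_right (by positivity) (pow_lt_one₀ hs0 hs1 (by omega))
    _ = 1 := hmean

theorem lt_tsum_mul_pow (hρsum : ∑' k, ρ k = 1) (hmean : ∑' k : ℕ, (k : ℝ) * ρ k = 1) {s : ℝ}
    (hs0 : 0 ≤ s) (hs1 : s < 1) : s < ∑' k, ρ k * s ^ k := by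
  have hS := summable_of_tsum_ne_zero (hρsum ▸ one_ne_zero)
  have hS1 := summable_of_tsum_ne_zero (hmean ▸ one_ne_zero)
  have htangent : ∑' k : ℕ, (ρ k + k * ρ k * (s - 1)) = s := by
    rw [hS.tsum_add (hS1.mul_right _), tsum_mul_right, hρsum, hmean]
    ring
  -- Bernoulli: `ρ k s^k` lies above its tangent line at `s = 1`, strictly for `k = k₀`.
  calc s = ∑' k : ℕ, (ρ k + k * ρ k * (s - 1)) := htangent.symm
    _ < ∑' k, ρ k * s ^ k := by
      refine Summable.tsum_lt_tsum (i := k₀) (fun k => ?_) ?_ (hS.add (hS1.mul_right _))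
        (summable_mul_pow_of_le_one_s18 hρ0 hS id hs0 hs1.le)
      · nlinarith [mul_le_mul_of_nonneg_left (one_add_mul_sub_le_pow (by linarith : -1 ≤ s) k)
          (hρ0 k)]
      · nlinarith [mul_lt_mul_of_pos_left (one_add_mul_sub_lt_pow hs0 hs1.ne hk₀) hρk₀]

end GeneratingFunction

theorem stmt_18_general (ρ : ℕ → ℝ) (hρ0 : ∀ k, 0 ≤ ρ k) (hρsum : ∑' k : ℕ, ρ k = 1)
    (hmean : ∑' k : ℕ, (k : ℝ) * ρ k = 1) (hρ1 : ρ 1 ≠ 1)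
    (α : ℝ) (hα1 : 1 < α) (L : ℝ → ℝ)
    (hL : ∀ x ∈ Set.Ioo (0 : ℝ) 1,
      L x = ((∑' k : ℕ, ρ k * (1 - x) ^ k) - (1 - x)) / x ^ α)
    (hslow : ∀ c : ℝ, 0 < c →
      Filter.Tendsto (fun x : ℝ => L (c * x) / L x) (nhdsWithin 0 (Set.Ioi 0)) (nhds 1))
    (g : ℝ → ℝ) (hg : ∀ s, g s = ∑' k : ℕ, (k : ℝ) * ρ k * s ^ (k - 1))
    (r : ℝ) (hr0 : 0 < r) (hr1 : r < 1) :
    (∀ᶠ x in nhdsWithin (0 : ℝ) (Set.Ioi 0), 1 - g (1 - x) ≠ 0) ∧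
    Filter.Tendsto (fun x : ℝ => (g (1 - x * (1 - r)) - g (1 - x)) / (1 - g (1 - x)))
      (nhdsWithin 0 (Set.Ioi 0)) (nhds (1 - (1 - r) ^ (α - 1))) := by
  obtain ⟨k₀, hk₀, hρk₀⟩ := exists_two_le_pos_of_tsum_natCast_mul_eq_one hρ0 hmean hρ1
  have hS1 := summable_of_tsum_ne_zero (hmean ▸ one_ne_zero)
  set M := fun x : ℝ => (∑' k : ℕ, ρ k * (1 - x) ^ k) - (1 - x)
  set D := fun x : ℝ => 1 - g (1 - x)
  have hMD : ∀ x ∈ Ioo 0 1, HasDerivAt M (D x) x := fun x hx => by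
    have hlin := (hasDerivAt_id' x).const_sub 1
    have := ((hasDerivAt_tsum_mul_pow hρ0 hS1 ⟨by linarith [hx.2], by linarith [hx.1]⟩).comp x
      hlin).sub hlin
    exact this.congr_deriv (by simp only [D, hg]; ring)
  have hDmono : MonotoneOn D (Ioo 0 1) := fun x hx y hy hxy => by
    simp only [D, hg, sub_le_sub_iff_left]
    exact tsum_natCast_mul_pow_le hρ0 hS1 (by linarith [hy.2]) (by linarith) (by linarith [hx.1])
  have hDpos : ∀ x ∈ Ioo 0 1, 0 < D x := fun x hx => by
    simp only [D, hg, sub_pos]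
    exact tsum_natCast_mul_pow_lt_one hρ0 hk₀ hρk₀ hmean (by linarith [hx.2]) (by linarith [hx.1])
  have hMpos : ∀ x ∈ Ioo 0 1, 0 < M x := fun x hx =>
    sub_pos.2 (lt_tsum_mul_pow hρ0 hk₀ hρk₀ hρsum hmean (by linarith [hx.2]) (by linarith [hx.1]))
  have hreg : ∀ c, 0 < c → Tendsto (fun x => M (c * x) / M x) (𝓝[>] 0) (𝓝 (c ^ α)) :=
    fun c hc => tendsto_div_rpow_of_slowlyVarying hc (by
      filter_upwards [Ioo_mem_nhdsGT one_pos] with x hx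
      rw [hL x hx, mul_div_cancel₀ _ (Real.rpow_pos_of_pos hx.1 α).ne']) (hslow c hc)
  have hlim := tendsto_deriv_div_of_monotoneOn hMD hDmono hMpos one_pos (by linarith : α ≠ 0)
    (by linarith : 0 < 1 - r) hreg
  have hmem : ∀ᶠ x in 𝓝[>] 0, x ∈ Ioo (0 : ℝ) 1 := Ioo_mem_nhdsGT one_pos
  refine ⟨hmem.mono fun x hx => (hDpos x hx).ne', (tendsto_const_nhds.sub hlim).congr' ?_⟩
  filter_upwards [hmem] with x hx
  rw [one_sub_div (hDpos x hx).ne', mul_comm x]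
  simp only [D]
  ring_nf

/-- Let `g(s) = ∑_{k≥1} k ρ(k) s^{k−1}`. For fixed `r ∈ (0,1)`, the conditional
generating function `(g(1 − x(1−r)) − g(1−x))/(1 − g(1−x))` tends to
`1 − (1−r)^{α−1}` as `x → 0⁺`, the denominator being nonzero for all small `x > 0`. -/
theorem stmt_18 (ρ : ℕ → ℝ) (hρ0 : ∀ k, 0 ≤ ρ k) (hρsum : ∑' k : ℕ, ρ k = 1)
    (hmean : ∑' k : ℕ, (k : ℝ) * ρ k = 1) (hρ1 : ρ 1 ≠ 1)
    (α : ℝ) (hα1 : 1 < α) (hα2 : α ≤ 2) (L : ℝ → ℝ)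
    (hL : ∀ x ∈ Set.Ioo (0 : ℝ) 1,
      L x = ((∑' k : ℕ, ρ k * (1 - x) ^ k) - (1 - x)) / x ^ α)
    (hslow : ∀ c : ℝ, 0 < c →
      Filter.Tendsto (fun x : ℝ => L (c * x) / L x) (nhdsWithin 0 (Set.Ioi 0)) (nhds 1))
    (g : ℝ → ℝ) (hg : ∀ s, g s = ∑' k : ℕ, (k : ℝ) * ρ k * s ^ (k - 1))
    (r : ℝ) (hr0 : 0 < r) (hr1 : r < 1) :
    (∀ᶠ x in nhdsWithin (0 : ℝ) (Set.Ioi 0), 1 - g (1 - x) ≠ 0) ∧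
    Filter.Tendsto (fun x : ℝ => (g (1 - x * (1 - r)) - g (1 - x)) / (1 - g (1 - x)))
      (nhdsWithin 0 (Set.Ioi 0)) (nhds (1 - (1 - r) ^ (α - 1))) :=
  stmt_18_general ρ hρ0 hρsum hmean hρ1 α hα1 L hL hslow g hg r hr0 hr1
end

section
/- Let s ∈ (0,1) and M > 0, and let F : ℝ → ℝ be a function that is nonincreasing on [0,∞) with 0 ≤ F(x) ≤ 1 for all x ≥ 0. If ∫₀^∞ F(x)·θ·e^{−θx} dx ≤ M·(1−e^{−θ})^s for every θ > 0, then F(x) ≤ (M/(1−e^{−1}))·x^{−s} for every x > 0. -/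
/-!
Take `θ = 1/x`. On `(0, x]` monotonicity gives `F t ≥ F x`, and `∫₀ˣ θ e^{-θt} dt = 1 - e^{-1}`,
so `F x (1 - e^{-1})` is at most the Laplace average, hence at most
`M (1 - e^{-θ})^s ≤ M θ^s = M x^{-s}`.
-/

open MeasureTheory Set Real

lemma integral_Ioc_mul_exp_neg_mul {θ x : ℝ} (hx : 0 ≤ x) :
    ∫ t in Ioc 0 x, θ * exp (-θ * t) = 1 - exp (-θ * x) := by
  have hderiv (t : ℝ) : HasDerivAt (fun t => -exp (-θ * t)) (θ * exp (-θ * t)) t := by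
    simpa only [neg_mul] using ProbabilityTheory.hasDerivAt_neg_exp_mul_exp (r := θ) (x := t)
  rw [← intervalIntegral.integral_of_le hx,
    intervalIntegral.integral_eq_sub_of_hasDerivAt (fun t _ => hderiv t)
      ((by fun_prop : Continuous fun t => θ * exp (-θ * t)).intervalIntegrable 0 x)]
  simp only [mul_zero, exp_zero]
  ring

lemma AntitoneOn.integrableOn_mul_exp_neg_mul {F : ℝ → ℝ} (hanti : AntitoneOn F (Ici 0))
    (hF0 : ∀ x, 0 ≤ x → 0 ≤ F x) {θ : ℝ} (hθ : 0 < θ) :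
    IntegrableOn (fun t => F t * (θ * exp (-θ * t))) (Ioi 0) := by
  have hexp : IntegrableOn (fun t => θ * exp (-θ * t)) (Ioi 0) :=
    (exp_neg_integrableOn_Ioi 0 hθ).const_mul θ
  refine hexp.bdd_mul (c := F 0) ?_ ?_
  · exact ((aemeasurable_restrict_of_antitoneOn measurableSet_Ici hanti).mono_measure
      (Measure.restrict_mono Ioi_subset_Ici_self le_rfl)).aestronglyMeasurable
  · filter_upwards [self_mem_ae_restrict measurableSet_Ioi] with t (ht : 0 < t)
    rw [norm_of_nonneg (hF0 t ht.le)]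
    exact hanti self_mem_Ici ht.le ht.le

lemma AntitoneOn.mul_one_sub_exp_neg_mul_le_integral {F : ℝ → ℝ}
    (hanti : AntitoneOn F (Ici 0)) (hF0 : ∀ x, 0 ≤ x → 0 ≤ F x) {θ x : ℝ} (hθ : 0 < θ)
    (hx : 0 < x) :
    F x * (1 - exp (-θ * x)) ≤ ∫ t in Ioi 0, F t * (θ * exp (-θ * t)) := by
  have hint := hanti.integrableOn_mul_exp_neg_mul hF0 hθ
  calc F x * (1 - exp (-θ * x)) = ∫ t in Ioc 0 x, F x * (θ * exp (-θ * t)) := by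
        rw [integral_const_mul, integral_Ioc_mul_exp_neg_mul hx.le]
    _ ≤ ∫ t in Ioc 0 x, F t * (θ * exp (-θ * t)) := by
        refine setIntegral_mono_on (Continuous.integrableOn_Ioc (by fun_prop))
          (hint.mono_set Ioc_subset_Ioi_self) measurableSet_Ioc fun t ht => ?_
        exact mul_le_mul_of_nonneg_right (hanti ht.1.le hx.le ht.2) (by positivity)
    _ ≤ ∫ t in Ioi 0, F t * (θ * exp (-θ * t)) := by
        refine setIntegral_mono_set hint ?_ (.of_forall Ioc_subset_Ioi_self)
        filter_upwards [self_mem_ae_restrict measurableSet_Ioi] with t (ht : 0 < t)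
        have := hF0 t ht.le
        positivity

theorem stmt_19_general (s M : ℝ) (hs0 : 0 < s) (hM : 0 < M) (F : ℝ → ℝ)
    (hanti : AntitoneOn F (Set.Ici 0))
    (hF0 : ∀ x, 0 ≤ x → 0 ≤ F x)
    (hLap : ∀ θ : ℝ, 0 < θ →
      (∫ x in Set.Ioi (0 : ℝ), F x * (θ * Real.exp (-θ * x)))
        ≤ M * (1 - Real.exp (-θ)) ^ s) :
    ∀ x : ℝ, 0 < x → F x ≤ (M / (1 - Real.exp (-1))) * x ^ (-s) := by
  intro x hx
  have hθ : 0 < x⁻¹ := inv_pos.2 hx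
  have hlower := hanti.mul_one_sub_exp_neg_mul_le_integral hF0 hθ hx
  rw [neg_mul, inv_mul_cancel₀ hx.ne'] at hlower
  have hpow : (1 - exp (-x⁻¹)) ^ s ≤ x ^ (-s) := by
    rw [rpow_neg hx.le, ← inv_rpow hx.le]
    exact rpow_le_rpow (sub_nonneg.2 (exp_le_one_iff.2 (neg_nonpos.2 hθ.le)))
      (by linarith [one_sub_le_exp_neg x⁻¹]) hs0.le
  rw [div_mul_eq_mul_div, le_div_iff₀ (sub_pos.2 (exp_lt_one_iff.2 (by norm_num)))]
  calc F x * (1 - exp (-1)) ≤ M * (1 - exp (-x⁻¹)) ^ s := hlower.trans (hLap _ hθ)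
    _ ≤ M * x ^ (-s) := mul_le_mul_of_nonneg_left hpow hM.le

/-- Tauberian-type estimate: if `F : ℝ → ℝ` is nonincreasing on `[0,∞)` with values in
`[0,1]` and `∫₀^∞ F(x) θ e^{−θx} dx ≤ M (1−e^{−θ})^s` for every `θ > 0`, then
`F(x) ≤ (M/(1−e^{−1})) x^{−s}` for every `x > 0`. -/
theorem stmt_19 (s M : ℝ) (hs0 : 0 < s) (hs1 : s < 1) (hM : 0 < M) (F : ℝ → ℝ)
    (hanti : AntitoneOn F (Set.Ici 0))
    (hF0 : ∀ x, 0 ≤ x → 0 ≤ F x) (hF1 : ∀ x, 0 ≤ x → F x ≤ 1)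
    (hLap : ∀ θ : ℝ, 0 < θ →
      (∫ x in Set.Ioi (0 : ℝ), F x * (θ * Real.exp (-θ * x)))
        ≤ M * (1 - Real.exp (-θ)) ^ s) :
    ∀ x : ℝ, 0 < x → F x ≤ (M / (1 - Real.exp (-1))) * x ^ (-s) :=
  stmt_19_general s M hs0 hM F hanti hF0 hLap
end
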